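/- arXiv:math/0612816 — 6 statements merged into one kernel-verified Lean document; each statement's English description precedes it below -/
import Mathlib

section
/- Let Γ = {u ∈ {0,1}^ℕ : ∀ k ≥ 0, ū ≤ S^k u ≤ u} and Ξ = {u ∈ {0,1}^ℕ : ∀ k ≥ 0, 0u ≤ S^k u ≤ 1u}, where 0u and 1u denote prepending the symbol 0 (resp. 1) to u. Then u ∈ Γ ∩ Ξ if and only if u = 1^∞ or there exists j ≥ 1 such that u = (1^j 0)^∞ (the periodic sequence repeating j ones followed by a zero). -/
/-- The shift map: `(shift k u) n = u (n + k)`. -/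
def shift (k : ℕ) (u : ℕ → Fin 2) : ℕ → Fin 2 := fun n => u (n + k)

/-- Bitwise complement of a binary sequence. -/
def complSeq (u : ℕ → Fin 2) : ℕ → Fin 2 := fun n => 1 - u n

/-- Prepend a digit to a binary sequence. -/
def cons (b : Fin 2) (u : ℕ → Fin 2) : ℕ → Fin 2 := fun n => Nat.casesOn n b u

/-- The set Γ of binary sequences with ū ≤ Sᵏu ≤ u (lexicographically) for all k. -/
def Gamma : Set (ℕ → Fin 2) :=
  {u | ∀ k : ℕ, toLex (complSeq u) ≤ toLex (shift k u) ∧ toLex (shift k u) ≤ toLex u}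

/-- The set Ξ of binary sequences with 0u ≤ Sᵏu ≤ 1u (lexicographically) for all k. -/
def Xi : Set (ℕ → Fin 2) :=
  {u | ∀ k : ℕ, toLex (cons 0 u) ≤ toLex (shift k u) ∧ toLex (shift k u) ≤ toLex (cons 1 u)}

/-- The periodic sequence `(1^j 0)^∞`. -/
def perSeq (j : ℕ) : ℕ → Fin 2 := fun n => if n % (j + 1) < j then 1 else 0

/-!
An element u of Γ starts with 1, since ū ≤ u. If moreover u k = 0, then Sᵏu = 0 Sᵏ⁺¹u, so
0u ≤ Sᵏu gives u ≤ Sᵏ⁺¹u, while Γ gives Sᵏ⁺¹u ≤ u: u has period k + 1, and with k its first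
zero this makes u = (1ᵏ0)^∞. Conversely, the shifts of (1ʲ0)^∞ are its j + 1 rotations
1ʲ⁻ʳ0(1ʲ0)^∞, and each comparison is an equality or is decided at the first zero of the
smaller side, except ū ≤ Sʲu = 0u, which holds coordinatewise because (1ʲ0)^∞ has no two consecutive zeros.
-/

open Function

theorem toLex_lt_of_ones_then_zero {x y : ℕ → Fin 2} {i : ℕ} (hx : ∀ n < i, x n = 1)
    (hxi : x i = 0) (hy : ∀ n ≤ i, y n = 1) : toLex x < toLex y :=
  ⟨i, fun n hn => show x n = y n from (hx n hn).trans (hy n hn.le).symm,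
    show x i < y i by rw [hxi, hy i le_rfl]; decide⟩

theorem toLex_lt_of_head {x y : ℕ → Fin 2} (hx : x 0 = 0) (hy : y 0 = 1) :
    toLex x < toLex y :=
  toLex_lt_of_ones_then_zero (fun n hn => absurd hn n.not_lt_zero) hx
    fun n hn => by rwa [Nat.le_zero.mp hn]

theorem toLex_le_of_cons_le_cons {a : Fin 2} {x y : ℕ → Fin 2}
    (h : toLex (cons a x) ≤ toLex (cons a y)) : toLex x ≤ toLex y := by
  rcases h.lt_or_eq with ⟨_ | i, hpre, hi⟩ | h
  · exact absurd hi (lt_irrefl a)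
  · exact le_of_lt ⟨i, fun n hn => hpre (n + 1) (by omega), hi⟩
  · exact le_of_eq (congrArg toLex (funext fun n => congrFun (toLex.injective h) (n + 1)))

theorem shift_eq_cons (k : ℕ) (u : ℕ → Fin 2) : shift k u = cons (u k) (shift (k + 1) u) := by
  funext n
  cases n with
  | zero => simp [shift, cons]
  | succ n => simp only [shift, cons]; congr 1; omega

theorem head_eq_one_of_mem_Gamma {u : ℕ → Fin 2} (hu : u ∈ Gamma) : u 0 = 1 := by
  refine Fin.eq_one_of_ne_zero _ fun h0 => ?_
  have hlt : toLex u < toLex (complSeq u) :=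
    toLex_lt_of_head h0 (by simp [complSeq, h0])
  exact ((hu 0).1.trans (hu 0).2).not_gt hlt

theorem periodic_of_mem_Gamma_inter_Xi {u : ℕ → Fin 2} (hu : u ∈ Gamma ∩ Xi) {k : ℕ}
    (hk : u k = 0) : Periodic u (k + 1) := by
  have hle : toLex u ≤ toLex (shift (k + 1) u) := by
    have h := (hu.2 k).1
    rw [shift_eq_cons, hk] at h
    exact toLex_le_of_cons_le_cons h
  have heq : shift (k + 1) u = u := toLex.injective ((hu.1 (k + 1)).2.antisymm hle)
  exact congrFun heq

theorem eq_perSeq_of_periodic {u : ℕ → Fin 2} {j : ℕ} (hper : Periodic u (j + 1))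
    (hones : ∀ n < j, u n = 1) (hj : u j = 0) : u = perSeq j := by
  funext n
  rw [← hper.map_mod_nat n, perSeq]
  split_ifs with h
  · exact hones _ h
  · rwa [show n % (j + 1) = j by have := Nat.mod_lt n (by omega : 0 < j + 1); omega]

theorem perSeq_periodic (j : ℕ) : Periodic (perSeq j) (j + 1) := fun n => by
  simp [perSeq]

theorem perSeq_of_lt {j n : ℕ} (h : n < j) : perSeq j n = 1 := by
  simp [perSeq, Nat.mod_eq_of_lt (by omega : n < j + 1), h]

theorem perSeq_self (j : ℕ) : perSeq j j = 0 := by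
  simp [perSeq]

theorem shift_perSeq_mod (j k : ℕ) : shift k (perSeq j) = shift (k % (j + 1)) (perSeq j) := by
  funext n
  conv_lhs => rw [shift, ← Nat.mod_add_div k (j + 1), ← add_assoc, mul_comm]
  exact (perSeq_periodic j).nat_mul _ _

theorem shift_perSeq_self (j : ℕ) : shift j (perSeq j) = cons 0 (perSeq j) := by
  rw [shift_eq_cons, perSeq_self]
  exact congrArg _ (funext (perSeq_periodic j))

theorem shift_perSeq_sub {j r : ℕ} (hr : r ≤ j) : shift r (perSeq j) (j - r) = 0 := by
  simp [shift, Nat.sub_add_cancel hr, perSeq_self]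

theorem cons_one_perSeq_of_le {j n : ℕ} (h : n ≤ j) : cons 1 (perSeq j) n = 1 := by
  cases n with
  | zero => rfl
  | succ n => exact perSeq_of_lt h

theorem perSeq_add_one_of_eq_zero {j m : ℕ} (hj : 1 ≤ j) (h : perSeq j m = 0) :
    perSeq j (m + 1) = 1 := by
  have hm : m % (j + 1) = j := by
    by_contra hne
    have := Nat.mod_lt m (by omega : 0 < j + 1)
    rw [perSeq, if_pos (by omega)] at h
    exact one_ne_zero h
  refine if_pos ?_
  rw [Nat.add_mod, hm, Nat.mod_eq_of_lt (by omega : 1 < j + 1), Nat.mod_self]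
  omega

theorem complSeq_perSeq_le {j : ℕ} (hj : 1 ≤ j) : complSeq (perSeq j) ≤ cons 0 (perSeq j) := by
  intro n
  cases n with
  | zero => simp [complSeq, cons, perSeq_of_lt hj]
  | succ m =>
    show 1 - perSeq j (m + 1) ≤ perSeq j m
    by_cases h : perSeq j m = 0
    · rw [perSeq_add_one_of_eq_zero hj h, h]
      decide
    · rw [Fin.eq_one_of_ne_zero _ h]
      exact Fin.le_last _

theorem perSeq_mem_Gamma {j : ℕ} (hj : 1 ≤ j) : perSeq j ∈ Gamma := by
  intro k
  rw [shift_perSeq_mod]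
  have hr : k % (j + 1) ≤ j := Nat.lt_succ_iff.mp (Nat.mod_lt k (by omega))
  generalize k % (j + 1) = r at hr ⊢
  constructor
  · rcases hr.lt_or_eq with hr | rfl
    · exact le_of_lt (toLex_lt_of_head (by simp [complSeq, perSeq_of_lt hj])
        (perSeq_of_lt (by omega)))
    · rw [shift_perSeq_self]
      exact Pi.toLex_monotone (complSeq_perSeq_le hj)
  · rcases Nat.eq_zero_or_pos r with rfl | hr0
    · exact le_rfl
    · exact le_of_lt (toLex_lt_of_ones_then_zero (fun n hn => perSeq_of_lt (by omega))
        (shift_perSeq_sub hr) fun n hn => perSeq_of_lt (by omega))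

theorem perSeq_mem_Xi (j : ℕ) : perSeq j ∈ Xi := by
  intro k
  rw [shift_perSeq_mod]
  have hr : k % (j + 1) ≤ j := Nat.lt_succ_iff.mp (Nat.mod_lt k (by omega))
  generalize k % (j + 1) = r at hr ⊢
  constructor
  · rcases hr.lt_or_eq with hr | rfl
    · exact le_of_lt (toLex_lt_of_head rfl (perSeq_of_lt (by omega)))
    · rw [shift_perSeq_self]
  · exact le_of_lt (toLex_lt_of_ones_then_zero (fun n hn => perSeq_of_lt (by omega))
      (shift_perSeq_sub hr) fun n hn => cons_one_perSeq_of_le (by omega))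

theorem const_one_mem_Gamma_inter_Xi : (fun _ => (1 : Fin 2)) ∈ Gamma ∩ Xi := by
  have hcons : cons 1 (fun _ => (1 : Fin 2)) = fun _ => 1 := funext fun n => by cases n <;> rfl
  exact ⟨fun _ => ⟨le_of_lt (toLex_lt_of_head (by decide) rfl), le_rfl⟩,
    fun _ => ⟨le_of_lt (toLex_lt_of_head rfl rfl), by rw [hcons]; rfl⟩⟩

theorem stmt1 (u : ℕ → Fin 2) :
    u ∈ Gamma ∩ Xi ↔ u = (fun _ => 1) ∨ ∃ j : ℕ, 1 ≤ j ∧ u = perSeq j := by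
  constructor
  · intro hu
    by_cases hzero : ∃ k, u k = 0
    · right
      have hj := Nat.find_spec hzero
      have hones : ∀ n < Nat.find hzero, u n = 1 := fun n hn =>
        Fin.eq_one_of_ne_zero _ (Nat.find_min hzero hn)
      refine ⟨Nat.find hzero, Nat.one_le_iff_ne_zero.mpr fun h0 => ?_,
        eq_perSeq_of_periodic (periodic_of_mem_Gamma_inter_Xi hu hj) hones hj⟩
      rw [h0, head_eq_one_of_mem_Gamma hu.1] at hj
      exact one_ne_zero hj
    · push Not at hzero
      exact Or.inl (funext fun n => Fin.eq_one_of_ne_zero _ (hzero n))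
  · rintro (rfl | ⟨j, hj, rfl⟩)
    · exact const_one_mem_Gamma_inter_Xi
    · exact ⟨perSeq_mem_Gamma hj, perSeq_mem_Xi j⟩
end

section
/- Let v ∈ {0,1}^ℕ satisfy 0v ≤ S^k v ≤ 1v for all k ≥ 0 (i.e., v ∈ Ξ), and suppose v_0 = 1. Then the sequence u = 1v (obtained by prepending 1 to v) satisfies ū ≤ S^k u ≤ u for all k ≥ 0 (i.e., u ∈ Γ). -/
/-! For `k ≥ 1`, `Sᵏ(1v) = Sᵏ⁻¹v` lies between `0v` and `1v` because `v ∈ Ξ`, and the complement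
`0v̄` of `1v` lies below `0v` because `v` starts with `1`. -/

lemma toLex_lt_toLex_of_apply_zero_lt {α : Type*} [LT α] {x y : ℕ → α} (h : x 0 < y 0) :
    toLex x < toLex y :=
  ⟨0, fun _ hj => absurd hj (Nat.not_lt_zero _), h⟩

lemma toLex_cons_le_toLex_cons {b : Fin 2} {x y : ℕ → Fin 2} (h : toLex x ≤ toLex y) :
    toLex (cons b x) ≤ toLex (cons b y) := by
  rcases h.eq_or_lt with heq | ⟨i, hagree, hi⟩
  · rw [toLex.injective heq]
  · refine le_of_lt ⟨i + 1, fun j hj => ?_, hi⟩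
    cases j with
    | zero => rfl
    | succ j => exact hagree j (Nat.lt_of_succ_lt_succ hj)

lemma complSeq_cons (b : Fin 2) (v : ℕ → Fin 2) :
    complSeq (cons b v) = cons (1 - b) (complSeq v) := by
  funext n; cases n <;> rfl

lemma shift_succ_cons (k : ℕ) (b : Fin 2) (v : ℕ → Fin 2) :
    shift (k + 1) (cons b v) = shift k v :=
  rfl

lemma toLex_complSeq_lt_of_apply_zero_eq_one {v : ℕ → Fin 2} (hv0 : v 0 = 1) :
    toLex (complSeq v) < toLex v :=
  toLex_lt_toLex_of_apply_zero_lt (by simp [complSeq, hv0])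

theorem stmt4 (v : ℕ → Fin 2) (hv : v ∈ Xi) (hv0 : v 0 = 1) :
    cons 1 v ∈ Gamma := by
  have hcompl_le : toLex (complSeq (cons 1 v)) ≤ toLex (cons 0 v) := by
    rw [complSeq_cons, sub_self]
    exact toLex_cons_le_toLex_cons (toLex_complSeq_lt_of_apply_zero_eq_one hv0).le
  rintro (_ | k)
  · exact ⟨(toLex_complSeq_lt_of_apply_zero_eq_one rfl).le, le_rfl⟩
  · rw [shift_succ_cons]
    exact ⟨hcompl_le.trans (hv k).1, (hv k).2⟩
end

section
/- Let u ∈ Γ, i.e., ū ≤ S^k u ≤ u for all k ≥ 0, and suppose there is a binary sequence v such that 0v ≤ S^k u ≤ 1v for all k ≥ 0, with additionally 1v = sup_k S^k u and 0v = inf_k S^k u. Then v_0 = 1 and u = 1v. -/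
/-!
A sequence `u ∈ Γ` dominates all its shifts and is itself the shift `S⁰u`, so it is the
supremum of its orbit; hence `u = 1v`. Its complement `ū = 0v̄` bounds the orbit from below,
so `0v̄ ≤ 0v`; comparing the second digits gives `1 - v₀ ≤ v₀`, i.e. `v₀ = 1`.
-/

def lexOrbit (u : ℕ → Fin 2) : Set (Lex (ℕ → Fin 2)) :=
  {x | ∃ k : ℕ, x = toLex (shift k u)}

lemma isGreatest_lexOrbit_of_mem_Gamma {u : ℕ → Fin 2} (hu : u ∈ Gamma) :
    IsGreatest (lexOrbit u) (toLex u) :=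
  ⟨⟨0, rfl⟩, by rintro _ ⟨k, rfl⟩; exact (hu k).2⟩

lemma complSeq_mem_lowerBounds_lexOrbit {u : ℕ → Fin 2} (hu : u ∈ Gamma) :
    toLex (complSeq u) ∈ lowerBounds (lexOrbit u) := by
  rintro _ ⟨k, rfl⟩
  exact (hu k).1

theorem stmt7_general (u v : ℕ → Fin 2) (hu : u ∈ Gamma)
    (hsup : IsLUB {x : Lex (ℕ → Fin 2) | ∃ k : ℕ, x = toLex (shift k u)} (toLex (cons 1 v)))
    (hinf : IsGLB {x : Lex (ℕ → Fin 2) | ∃ k : ℕ, x = toLex (shift k u)} (toLex (cons 0 v))) :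
    v 0 = 1 ∧ u = cons 1 v := by
  have hu_eq : u = cons 1 v :=
    toLex.injective ((isGreatest_lexOrbit_of_mem_Gamma hu).isLUB.unique hsup)
  refine ⟨?_, hu_eq⟩
  have hcompl_le : toLex (complSeq u) ≤ toLex (cons 0 v) :=
    hinf.2 (complSeq_mem_lowerBounds_lexOrbit hu)
  subst hu_eq
  have hsecond : complSeq (cons 1 v) 1 ≤ cons 0 v 1 :=
    Pi.apply_le_of_toLex hcompl_le fun j hj => by
      obtain rfl : j = 0 := by omega
      rfl
  change 1 - v 0 ≤ v 0 at hsecond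
  omega

theorem stmt7 (u v : ℕ → Fin 2) (hu : u ∈ Gamma)
    (hbound : ∀ k : ℕ, toLex (cons 0 v) ≤ toLex (shift k u) ∧
      toLex (shift k u) ≤ toLex (cons 1 v))
    (hsup : IsLUB {x : Lex (ℕ → Fin 2) | ∃ k : ℕ, x = toLex (shift k u)} (toLex (cons 1 v)))
    (hinf : IsGLB {x : Lex (ℕ → Fin 2) | ∃ k : ℕ, x = toLex (shift k u)} (toLex (cons 0 v))) :
    v 0 = 1 ∧ u = cons 1 v :=
  stmt7_general u v hu hsup hinf
end

section
/- Let m be a nonempty finite binary word and let t ∈ Γ = {u : ∀ k, ū ≤ S^k u ≤ u} be a sequence beginning with the word m·m̄ (m followed by its bitwise complement). Then t = (m m̄)^∞, the periodic sequence with period m m̄. -/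
/-!
Write `L = |m|`. Membership in `Γ` forbids two patterns: `S^k t` agreeing with `t` on `[0, r)` and
exceeding it at `r`, and `S^k t` agreeing with `t̄` on `[0, r)` and falling below it at `r`.
By strong induction, `t (n + L) = 1 - t n` for all `n`: the prefix `m m̄` gives it for `n < L`, and
if it holds below `n + L`, the shift by `L` bounds `t (n + 2L)` from below by `1 - t (n + L)`, while
the resulting `2L`-periodicity below `n` and the shift by `2L` bound it from above by `t n`.
So `t` is `2L`-periodic and is determined by its prefix `m m̄`.
-/

section Gamma

variable {t : ℕ → Fin 2}

theorem apply_add_le_apply_of_mem_Gamma (ht : t ∈ Gamma) {k r : ℕ} (h : ∀ j < r, t (j + k) = t j) :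
    t (r + k) ≤ t r := by
  by_contra! hlt
  exact (ht k).2.not_gt ⟨r, fun j hj => (h j hj).symm, hlt⟩

theorem one_sub_apply_le_apply_add_of_mem_Gamma (ht : t ∈ Gamma) {k r : ℕ}
    (h : ∀ j < r, t (j + k) = 1 - t j) : 1 - t r ≤ t (r + k) := by
  by_contra! hlt
  exact (ht k).1.not_gt ⟨r, fun j hj => h j hj, hlt⟩

theorem apply_add_eq_one_sub_of_mem_Gamma (ht : t ∈ Gamma) {L : ℕ} (hL : 0 < L)
    (hbase : ∀ n < L, t (n + L) = 1 - t n) (n : ℕ) : t (n + L) = 1 - t n := by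
  induction n using Nat.strong_induction_on with
  | _ n ih =>
  rcases lt_or_ge n L with hn | hn
  · exact hbase n hn
  obtain ⟨r, rfl⟩ : ∃ r, n = r + L := ⟨n - L, by omega⟩
  have hperiodic : ∀ j < r, t (j + 2 * L) = t j := fun j hj => by
    rw [two_mul, ← add_assoc, ih (j + L) (by omega), ih j (by omega), sub_sub_cancel]
  have hle : t (r + L + L) ≤ 1 - t (r + L) := by
    rw [add_assoc, ← two_mul, ih r (by omega), sub_sub_cancel]
    exact apply_add_le_apply_of_mem_Gamma ht hperiodic
  exact le_antisymm hle (one_sub_apply_le_apply_add_of_mem_Gamma ht ih)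

end Gamma

theorem List.getD_append_map_one_sub_add_length (m : List (Fin 2)) (d : Fin 2) {i : ℕ}
    (hi : i < m.length) :
    (m ++ m.map (fun b => 1 - b)).getD (i + m.length) d =
      1 - (m ++ m.map (fun b => 1 - b)).getD i d := by
  rw [List.getD_append _ _ _ _ hi, List.getD_append_right _ _ _ _ (by omega),
    Nat.add_sub_cancel, List.getD_eq_getElem _ _ (by simpa using hi),
    List.getD_eq_getElem _ _ hi, List.getElem_map]

theorem stmt8 (m : List (Fin 2)) (hm : m ≠ []) (t : ℕ → Fin 2) (ht : t ∈ Gamma)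
    (hbegin : ∀ i < (m ++ m.map (fun b => 1 - b)).length,
      t i = (m ++ m.map (fun b => 1 - b)).getD i 0) :
    ∀ n : ℕ, t n = (m ++ m.map (fun b => 1 - b)).getD
      (n % (m ++ m.map (fun b => 1 - b)).length) 0 := by
  have hL : 0 < m.length := List.length_pos_iff.mpr hm
  have hlength : (m ++ m.map (fun b => 1 - b)).length = m.length + m.length := by simp
  have hanti : ∀ n, t (n + m.length) = 1 - t n :=
    apply_add_eq_one_sub_of_mem_Gamma ht hL fun n hn => by
      rw [hbegin _ (by omega), hbegin _ (by omega), m.getD_append_map_one_sub_add_length 0 hn]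
  have hperiodic : Function.Periodic t (m ++ m.map (fun b => 1 - b)).length := fun n => by
    rw [hlength, ← add_assoc, hanti, hanti, sub_sub_cancel]
  intro n
  rw [← hperiodic.map_mod_nat n, hbegin _ (Nat.mod_lt _ (by omega))]
end

section
/- Let u ∈ Γ = {u : ∀ k, ū ≤ S^k u ≤ u} and suppose there exists a sequence v such that for all k ≥ 0, 0v ≤ S^k u ≤ 1v, where 1v = sup_k S^k u and 0v = inf_k S^k u. Then u begins with 11, i.e., u_0 = u_1 = 1, unless u = (10)^∞. -/
/-!
Comparing first digits in `ū ≤ u` gives `u₀ = 1`. If moreover `u₁ = 0`, then comparing the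
second digits of `ū ≤ Sᵏu` (when `u_k = 0`) and of `Sᵏu ≤ u` (when `u_k = 1`) forces
`u_{k+1} = 1 - u_k` for every `k`, so `u = (10)^∞`.
-/

namespace Gamma

variable {u : ℕ → Fin 2}

theorem head_eq_one (hu : u ∈ Gamma) : u 0 = 1 := by
  have h := Pi.apply_le_of_toLex (i := 0) (hu 0).1 (by simp)
  simp only [complSeq, shift, add_zero] at h
  omega

theorem succ_eq_one_sub (hu : u ∈ Gamma) (h1 : u 1 = 0) (k : ℕ) : u (k + 1) = 1 - u k := by
  have h0 := head_eq_one hu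
  obtain hk | hk : u k = 0 ∨ u k = 1 := by omega
  · have h := Pi.apply_le_of_toLex (i := 1) (hu k).1 (fun j hj => by
      obtain rfl : j = 0 := by omega
      simp [complSeq, shift, h0, hk])
    simp only [complSeq, shift, h1, add_comm 1 k] at h
    omega
  · have h := Pi.apply_le_of_toLex (i := 1) (hu k).2 (fun j hj => by
      obtain rfl : j = 0 := by omega
      simp [shift, h0, hk])
    simp only [shift, h1, add_comm 1 k] at h
    omega

theorem eq_alternating (hu : u ∈ Gamma) (h1 : u 1 = 0) :
    u = fun n => if n % 2 = 0 then 1 else 0 := by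
  funext n
  induction n with
  | zero => simpa using head_eq_one hu
  | succ n ih =>
    rw [succ_eq_one_sub hu h1, ih]
    rcases Nat.mod_two_eq_zero_or_one n with h | h <;> simp [h, Nat.succ_mod_two_eq_zero_iff]

end Gamma

theorem stmt14_general (u : ℕ → Fin 2) (hu : u ∈ Gamma)
    (hne : u ≠ fun n => if n % 2 = 0 then 1 else 0) :
    u 0 = 1 ∧ u 1 = 1 := by
  refine ⟨Gamma.head_eq_one hu, ?_⟩
  by_contra h1
  exact hne (Gamma.eq_alternating hu (by omega))

theorem stmt14 (u : ℕ → Fin 2) (hu : u ∈ Gamma)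
    (v : ℕ → Fin 2)
    (hbound : ∀ k : ℕ, toLex (cons 0 v) ≤ toLex (shift k u) ∧
      toLex (shift k u) ≤ toLex (cons 1 v))
    (hsup : IsLUB {x : Lex (ℕ → Fin 2) | ∃ k : ℕ, x = toLex (shift k u)} (toLex (cons 1 v)))
    (hinf : IsGLB {x : Lex (ℕ → Fin 2) | ∃ k : ℕ, x = toLex (shift k u)} (toLex (cons 0 v)))
    (hne : u ≠ fun n => if n % 2 = 0 then 1 else 0) :
    u 0 = 1 ∧ u 1 = 1 :=
  stmt14_general u hu hne
end

section
/- Let u ∈ {0,1}^ℕ be purely periodic (i.e., there exists p ≥ 1 with S^p u = u) and belong to Γ = {u : ∀ k, ū ≤ S^k u ≤ u}. Then u does not satisfy the strict condition ū < S^k u < u for all k ≥ 0; in fact S^p u = u gives equality at k = p. Conversely, if u ∈ Γ is not purely periodic, then ū < S^k u < u for all k ≥ 1 and ū < u, i.e., u ∈ Γ₁ where Γ₁ = {u : ∀ k ≥ 1, ū < S^k u < u and ū < u}. -/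
/-! For u ∈ Γ, equality Sᵏu = u makes u purely periodic, and so does equality Sᵏu = ū,
since then S²ᵏu = Sᵏū = ū̄ = u. -/

lemma complSeq_complSeq (u : ℕ → Fin 2) : complSeq (complSeq u) = u := by
  funext n
  simp only [complSeq, sub_sub_cancel]

lemma shift_shift (j k : ℕ) (u : ℕ → Fin 2) : shift j (shift k u) = shift (k + j) u := by
  funext n
  simp only [shift, add_assoc, add_comm j k]

lemma shift_complSeq (k : ℕ) (u : ℕ → Fin 2) : shift k (complSeq u) = complSeq (shift k u) :=
  rfl

lemma shift_add_self_of_shift_eq_complSeq {k : ℕ} {u : ℕ → Fin 2}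
    (h : shift k u = complSeq u) : shift (k + k) u = u := by
  rw [← shift_shift, h, shift_complSeq, h, complSeq_complSeq]

lemma lt_shift_lt_of_mem_Gamma {u : ℕ → Fin 2} (hu : u ∈ Gamma)
    (haper : ¬ ∃ p : ℕ, 1 ≤ p ∧ shift p u = u) {k : ℕ} (hk : 1 ≤ k) :
    toLex (complSeq u) < toLex (shift k u) ∧ toLex (shift k u) < toLex u := by
  obtain ⟨hlow, hup⟩ := hu k
  refine ⟨hlow.lt_of_ne fun h => haper ⟨k + k, by omega, ?_⟩,
    hup.lt_of_ne fun h => haper ⟨k, hk, toLex.injective h⟩⟩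
  exact shift_add_self_of_shift_eq_complSeq (toLex.injective h).symm

theorem stmt16 (u : ℕ → Fin 2) (hu : u ∈ Gamma) :
    ((∃ p : ℕ, 1 ≤ p ∧ shift p u = u) →
      ¬ (∀ k : ℕ, toLex (complSeq u) < toLex (shift k u) ∧ toLex (shift k u) < toLex u)) ∧
    ((¬ ∃ p : ℕ, 1 ≤ p ∧ shift p u = u) →
      (∀ k : ℕ, 1 ≤ k →
        toLex (complSeq u) < toLex (shift k u) ∧ toLex (shift k u) < toLex u) ∧
      toLex (complSeq u) < toLex u) := by
  constructor
  · rintro ⟨p, -, hper⟩ hstrict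
    exact (hstrict p).2.ne (congrArg toLex hper)
  · intro haper
    have hstrict := fun k (hk : 1 ≤ k) => lt_shift_lt_of_mem_Gamma hu haper hk
    exact ⟨hstrict, (hstrict 1 le_rfl).1.trans (hstrict 1 le_rfl).2⟩
end
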